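/- arXiv:2603.23188 — 2 statements merged into one kernel-verified Lean document; each statement's English description precedes it below -/
import Mathlib

section
/- Let p,q,r be complex polynomials of degree ≤ 2 and set p̂=[q,r], q̂=[r,p], r̂=[p,q]. Then Res(p̂,q̂) = Δ(p,q,r)²·Discr(r), Res(p̂,r̂) = Δ(p,q,r)²·Discr(q), and Res(q̂,r̂) = Δ(p,q,r)²·Discr(p). -/
/-!
The coefficients of `[q,r]` are, up to sign and a factor `2`, the `2 × 2` minors of the
coefficient columns of `q` and `r`, that is, the cofactors of `Δ(p,q,r)` along the column of `p`.
Hence `Res([q,r],[r,p]) = Δ² Discr(r)` is a polynomial identity in the nine coefficients.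
The other two identities follow from it under the cyclic permutation `(p,q,r) ↦ (r,p,q)`,
because `Res` is symmetric and `Δ` is invariant under cyclic permutations.
-/

open Polynomial

/-- The polynomial bracket `[p,q] = p'q - pq'`. -/
noncomputable def pbr (p q : ℂ[X]) : ℂ[X] := derivative p * q - p * derivative q

/-- `Discr(p) = p₁² - 4 p₀ p₂`. -/
noncomputable def pdiscr (p : ℂ[X]) : ℂ := (p.coeff 1) ^ 2 - 4 * p.coeff 0 * p.coeff 2

/-- `Res(p,q) = (p₂q₀ - p₀q₂)² + (p₂q₁ - p₁q₂)(p₀q₁ - p₁q₀)`. -/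
noncomputable def pres (p q : ℂ[X]) : ℂ :=
  (p.coeff 2 * q.coeff 0 - p.coeff 0 * q.coeff 2) ^ 2 +
    (p.coeff 2 * q.coeff 1 - p.coeff 1 * q.coeff 2) *
      (p.coeff 0 * q.coeff 1 - p.coeff 1 * q.coeff 0)

/-- `Δ(p,q,r)`: determinant of the 3×3 matrix of coefficients of `p, q, r`. -/
noncomputable def pdelta (p q r : ℂ[X]) : ℂ :=
  Matrix.det !![p.coeff 0, q.coeff 0, r.coeff 0;
                p.coeff 1, q.coeff 1, r.coeff 1;
                p.coeff 2, q.coeff 2, r.coeff 2]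

lemma pres_comm (p q : ℂ[X]) : pres p q = pres q p := by
  unfold pres
  ring

lemma pdelta_eq (p q r : ℂ[X]) : pdelta p q r =
    p.coeff 0 * (q.coeff 1 * r.coeff 2 - q.coeff 2 * r.coeff 1)
    - q.coeff 0 * (p.coeff 1 * r.coeff 2 - p.coeff 2 * r.coeff 1)
    + r.coeff 0 * (p.coeff 1 * q.coeff 2 - p.coeff 2 * q.coeff 1) := by
  simp only [pdelta, Matrix.det_fin_three, Matrix.of_apply, Matrix.cons_val',
    Matrix.cons_val_zero, Matrix.cons_val_one, Matrix.cons_val_two, Matrix.head_cons,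
    Matrix.tail_cons, Matrix.empty_val', Matrix.cons_val_fin_one, Matrix.head_fin_const]
  ring

lemma pdelta_rotate (p q r : ℂ[X]) : pdelta r p q = pdelta p q r := by
  rw [pdelta_eq, pdelta_eq]
  ring

lemma coeff_pbr_zero (p q : ℂ[X]) :
    (pbr p q).coeff 0 = p.coeff 1 * q.coeff 0 - p.coeff 0 * q.coeff 1 := by
  simp [pbr, coeff_mul, coeff_derivative]

lemma coeff_pbr_one (p q : ℂ[X]) :
    (pbr p q).coeff 1 = 2 * (p.coeff 2 * q.coeff 0 - p.coeff 0 * q.coeff 2) := by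
  simp only [pbr, coeff_sub, coeff_mul, coeff_derivative,
    Finset.Nat.sum_antidiagonal_eq_sum_range_succ_mk, Nat.succ_eq_add_one, Nat.reduceAdd,
    Finset.sum_range_succ, Finset.range_one, Finset.sum_singleton, zero_add, CharP.cast_eq_zero,
    mul_one, tsub_zero, Nat.cast_one, tsub_self]
  ring

lemma coeff_pbr_two (p q : ℂ[X]) :
    (pbr p q).coeff 2 = p.coeff 2 * q.coeff 1 - p.coeff 1 * q.coeff 2
      + 3 * (p.coeff 3 * q.coeff 0 - p.coeff 0 * q.coeff 3) := by
  simp only [pbr, coeff_sub, coeff_mul, coeff_derivative,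
    Finset.Nat.sum_antidiagonal_eq_sum_range_succ_mk, Nat.succ_eq_add_one, Nat.reduceAdd,
    Finset.sum_range_succ, Finset.range_one, Finset.sum_singleton, zero_add, CharP.cast_eq_zero,
    mul_one, tsub_zero, Nat.cast_one, Nat.add_one_sub_one, Nat.cast_ofNat, tsub_self]
  ring

lemma coeff_three_eq_zero {R : Type*} [Semiring R] {p : R[X]} (hp : p.degree ≤ 2) :
    p.coeff 3 = 0 :=
  coeff_eq_zero_of_degree_lt (hp.trans_lt (by norm_num))

lemma pres_pbr_pbr_eq_pdelta_sq_mul_pdiscr {p q r : ℂ[X]}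
    (hp : p.degree ≤ 2) (hq : q.degree ≤ 2) (hr : r.degree ≤ 2) :
    pres (pbr q r) (pbr r p) = pdelta p q r ^ 2 * pdiscr r := by
  simp only [pres, pdiscr, pdelta_eq, coeff_pbr_zero, coeff_pbr_one, coeff_pbr_two,
    coeff_three_eq_zero hp, coeff_three_eq_zero hq, coeff_three_eq_zero hr]
  ring

theorem res_hat_identities (p q r : ℂ[X])
    (hp : p.degree ≤ 2) (hq : q.degree ≤ 2) (hr : r.degree ≤ 2) :
    pres (pbr q r) (pbr r p) = (pdelta p q r) ^ 2 * pdiscr r ∧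
    pres (pbr q r) (pbr p q) = (pdelta p q r) ^ 2 * pdiscr q ∧
    pres (pbr r p) (pbr p q) = (pdelta p q r) ^ 2 * pdiscr p := by
  refine ⟨pres_pbr_pbr_eq_pdelta_sq_mul_pdiscr hp hq hr, ?_, ?_⟩
  · rw [pres_comm, ← pdelta_rotate]
    exact pres_pbr_pbr_eq_pdelta_sq_mul_pdiscr hr hp hq
  · rw [← pdelta_rotate, ← pdelta_rotate]
    exact pres_pbr_pbr_eq_pdelta_sq_mul_pdiscr hq hr hp
end

section
/- Let e₁⁽¹⁾, e₂⁽¹⁾, e₁⁽²⁾, e₂⁽²⁾ be complex numbers with the first pair in the open right half-plane and the second pair in the open left half-plane. Define a = √((e₁⁽¹⁾-e₂⁽²⁾)(e₂⁽¹⁾-e₁⁽²⁾)) and b = √((e₁⁽¹⁾-e₁⁽²⁾)(e₂⁽¹⁾-e₂⁽²⁾)) with square roots chosen in the right half-plane. If e₁' = (e₁⁽¹⁾+e₂⁽¹⁾)/2, f₁' = (e₁⁽²⁾+e₂⁽²⁾)/2, and e₂', f₂' are the two roots of [p₁,p₂] = p₁'p₂ - p₁p₂' (where pⱼ is the monic quadratic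 with the j-th pair of roots) lying in the right and left half-plane respectively, then the updated quantities satisfy b'² = ab (that is, (e₁'-f₁')(e₂'-f₂') squared equals a²b²), i.e., the resultant identity Res(p₁,p₂) = Discr([p₁,p₂])/4 holds. -/
/-!
The bracket `[p₁,p₂] = p₁'p₂ - p₁p₂'` of two monic quadratics is again a quadratic, with leading
coefficient `s₁ - s₂` (the difference of the root sums). Expanding in the roots, its discriminant is
four times `∏ᵢⱼ (eᵢ⁽¹⁾ - eⱼ⁽²⁾)`, which is both `Res(p₁,p₂)` and `a²b²`. For a quadratic
`A X² + B X + C` with distinct roots `r, s` one has `(A (r - s))² = B² - 4AC`, and with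
`A = 2 (e₁' - f₁')` this is `b'² = a²b²`.
-/

open Polynomial

lemma discrim_eq_sq_mul_sub_of_roots {R : Type*} [CommRing R] [IsDomain R] {a b c r s : R}
    (hr : a * (r * r) + b * r + c = 0) (hs : a * (s * s) + b * s + c = 0) (hrs : r ≠ s) :
    discrim a b c = (a * (r - s)) ^ 2 := by
  have vieta : a * (r + s) + b = 0 := by
    refine (mul_eq_zero.mp ?_).resolve_left (sub_ne_zero.mpr hrs)
    linear_combination hr - hs
  rw [discrim_eq_sq_of_quadratic_eq_zero hr]
  linear_combination (2 * a * r + b + a * (r - s)) * vieta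

lemma X_sub_C_mul_X_sub_C {R : Type*} [CommRing R] (u v : R) :
    (X - C u) * (X - C v) = X ^ 2 + C (-(u + v)) * X + C (u * v) := by
  simp only [map_neg, map_add, map_mul]
  ring

lemma pbr_X_sub_C_mul_X_sub_C (u v w z : ℂ) :
    pbr ((X - C u) * (X - C v)) ((X - C w) * (X - C z)) =
      C ((u + v) - (w + z)) * X ^ 2 + C (2 * (w * z - u * v)) * X +
        C (u * v * (w + z) - (u + v) * (w * z)) := by
  simp only [pbr, derivative_mul, derivative_X, derivative_C, map_mul, map_add, map_sub,
    map_ofNat]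
  ring

lemma isRoot_quadratic_iff {R : Type*} [CommSemiring R] {A B C₀ x : R} :
    (C A * X ^ 2 + C B * X + C C₀).IsRoot x ↔ A * (x * x) + B * x + C₀ = 0 := by
  simp [IsRoot, sq]

lemma pdiscr_quadratic (A B C₀ : ℂ) : pdiscr (C A * X ^ 2 + C B * X + C C₀) = discrim A B C₀ := by
  simp [pdiscr, discrim, coeff_X, coeff_C]
  ring

lemma pdiscr_pbr_X_sub_C_mul_X_sub_C (u v w z : ℂ) :
    pdiscr (pbr ((X - C u) * (X - C v)) ((X - C w) * (X - C z))) =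
      4 * ((u - w) * (u - z) * (v - w) * (v - z)) := by
  rw [pbr_X_sub_C_mul_X_sub_C, pdiscr_quadratic, discrim]
  ring

lemma pres_X_sub_C_mul_X_sub_C (u v w z : ℂ) :
    pres ((X - C u) * (X - C v)) ((X - C w) * (X - C z)) =
      (u - w) * (u - z) * (v - w) * (v - z) := by
  simp only [pres, X_sub_C_mul_X_sub_C, coeff_add, coeff_C_mul, coeff_X_pow, coeff_X, coeff_C]
  norm_num
  ring

theorem agm_step_identity_general (e₁₁ e₂₁ e₁₂ e₂₂ a b e₂' f₂' : ℂ)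
    (ha : a ^ 2 = (e₁₁ - e₂₂) * (e₂₁ - e₁₂))
    (hb : b ^ 2 = (e₁₁ - e₁₂) * (e₂₁ - e₂₂))
    (he₂' : (pbr ((X - C e₁₁) * (X - C e₂₁)) ((X - C e₁₂) * (X - C e₂₂))).IsRoot e₂')
    (he₂'re : 0 < e₂'.re)
    (hf₂' : (pbr ((X - C e₁₁) * (X - C e₂₁)) ((X - C e₁₂) * (X - C e₂₂))).IsRoot f₂')
    (hf₂'re : f₂'.re < 0) :
    (((e₁₁ + e₂₁) / 2 - (e₁₂ + e₂₂) / 2) * (e₂' - f₂')) ^ 2 = a ^ 2 * b ^ 2 ∧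
    pres ((X - C e₁₁) * (X - C e₂₁)) ((X - C e₁₂) * (X - C e₂₂)) =
      pdiscr (pbr ((X - C e₁₁) * (X - C e₂₁)) ((X - C e₁₂) * (X - C e₂₂))) / 4 := by
  have hres : (e₁₁ - e₁₂) * (e₁₁ - e₂₂) * (e₂₁ - e₁₂) * (e₂₁ - e₂₂) = a ^ 2 * b ^ 2 := by
    rw [ha, hb]; ring
  have hne : e₂' ≠ f₂' := fun h => by rw [h] at he₂'re; linarith
  rw [pbr_X_sub_C_mul_X_sub_C, isRoot_quadratic_iff] at he₂' hf₂'
  have hdiscr := discrim_eq_sq_mul_sub_of_roots he₂' hf₂' hne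
  rw [discrim] at hdiscr
  constructor
  · linear_combination hres - hdiscr / 4
  · rw [pres_X_sub_C_mul_X_sub_C, pdiscr_pbr_X_sub_C_mul_X_sub_C]
    ring

theorem agm_step_identity (e₁₁ e₂₁ e₁₂ e₂₂ a b e₂' f₂' : ℂ)
    (h₁₁ : 0 < e₁₁.re) (h₂₁ : 0 < e₂₁.re) (h₁₂ : e₁₂.re < 0) (h₂₂ : e₂₂.re < 0)
    (ha : a ^ 2 = (e₁₁ - e₂₂) * (e₂₁ - e₁₂)) (ha' : 0 < a.re)
    (hb : b ^ 2 = (e₁₁ - e₁₂) * (e₂₁ - e₂₂)) (hb' : 0 < b.re)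
    (he₂' : (pbr ((X - C e₁₁) * (X - C e₂₁)) ((X - C e₁₂) * (X - C e₂₂))).IsRoot e₂')
    (he₂'re : 0 < e₂'.re)
    (hf₂' : (pbr ((X - C e₁₁) * (X - C e₂₁)) ((X - C e₁₂) * (X - C e₂₂))).IsRoot f₂')
    (hf₂'re : f₂'.re < 0) :
    (((e₁₁ + e₂₁) / 2 - (e₁₂ + e₂₂) / 2) * (e₂' - f₂')) ^ 2 = a ^ 2 * b ^ 2 ∧
    pres ((X - C e₁₁) * (X - C e₂₁)) ((X - C e₁₂) * (X - C e₂₂)) =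
      pdiscr (pbr ((X - C e₁₁) * (X - C e₂₁)) ((X - C e₁₂) * (X - C e₂₂))) / 4 :=
  agm_step_identity_general e₁₁ e₂₁ e₁₂ e₂₂ a b e₂' f₂' ha hb he₂' he₂'re hf₂' hf₂'re
end
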